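/- Under the hypotheses of the minimal Frenet system — n ≥ 3, D ⊂ ℝ² open connected, smooth maps z, X, Y, N, e₁, …, e_{n−2} : D → ℝ^{n+1} with (X, Y, e₁, …, e_{n−2}, N) orthonormal at every point, z_u = √E·X, z_v = √G·Y (E, G > 0 smooth), and smooth γ₁, γ₂, ν > 0 and constants λᵢ = cᵢ satisfying X_u = √E(γ₁Y + Σᵢcᵢeᵢ + νN), Y_u = −√E·γ₁X, (eᵢ)_u = −√E·cᵢX, N_u = −√E·νX, X_v = √G·γ₂Y, Y_v = √G(−γ₂X + Σᵢcᵢeᵢ − νN), (eᵢ)_v = −√G·cᵢY, N_v = +√G·νY — assume cᵢ = 0 for all i. Then for any fixed (u₀,v₀) ∈ D and all (u,v) ∈ D, the vectors X(u,v), Y(u,v), N(u,v) and the difference z(u,v) − z(u₀,v₀) lie in the fixed 3-dimensional linear subspace spanned by X(u₀,v₀), Y(u₀,v₀), N(u₀,v₀). Hence z is a surface contained in a three-dimensional affine subspace ℝ³ of ℝ^{n+1}, and it is minimal there: its second fundamental form coefficients with respect to N satisfy z_uu·N = E·ν and z_vv·N = −G·ν, so its mean curvature (z_uu·N)/E + (z_vv·N)/G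 vanishes identically. -/

import Mathlib

open Real Set
open scoped RealInnerProductSpace

noncomputable section

/-- Partial derivative in the first (`u`) direction. -/
def pu {α : Type*} [NormedAddCommGroup α] [NormedSpace ℝ α]
    (f : ℝ × ℝ → α) (p : ℝ × ℝ) : α :=
  fderiv ℝ f p (1, 0)

/-- Partial derivative in the second (`v`) direction. -/
def pv {α : Type*} [NormedAddCommGroup α] [NormedSpace ℝ α]
    (f : ℝ × ℝ → α) (p : ℝ × ℝ) : α :=
  fderiv ℝ f p (0, 1)

/-- The family `(X, Y, e₁, …, e_{n-2}, N)` is an orthonormal system in `ℝ^{n+1}`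
at every point of `D`. -/
def OrthFrame (n : ℕ) (D : Set (ℝ × ℝ))
    (X Y N : ℝ × ℝ → EuclideanSpace ℝ (Fin (n + 1)))
    (e : Fin (n - 2) → ℝ × ℝ → EuclideanSpace ℝ (Fin (n + 1))) : Prop :=
  ∀ p ∈ D,
    ⟪X p, X p⟫ = 1 ∧ ⟪Y p, Y p⟫ = 1 ∧ ⟪N p, N p⟫ = 1 ∧
    ⟪X p, Y p⟫ = 0 ∧ ⟪X p, N p⟫ = 0 ∧ ⟪Y p, N p⟫ = 0 ∧
    (∀ i, ⟪e i p, e i p⟫ = 1 ∧ ⟪X p, e i p⟫ = 0 ∧ ⟪Y p, e i p⟫ = 0 ∧ ⟪N p, e i p⟫ = 0) ∧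
    (∀ i j, i ≠ j → ⟪e i p, e j p⟫ = 0)

/-- A map on an open preconnected set with vanishing derivative is constant. -/
lemma const_of_fderiv_zero {E : Type*} [NormedAddCommGroup E] [NormedSpace ℝ E]
    {f : ℝ × ℝ → E} {D : Set (ℝ × ℝ)} (hD : IsOpen D) (hc : IsPreconnected D)
    (hdiff : ∀ p ∈ D, DifferentiableAt ℝ f p)
    (hzero : ∀ p ∈ D, fderiv ℝ f p = 0)
    {p₀ p : ℝ × ℝ} (hp₀ : p₀ ∈ D) (hp : p ∈ D) : f p = f p₀ := by
  have hloc : ∀ q ∈ D, ∀ c : E, f q = c →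
      ∃ r > 0, Metric.ball q r ⊆ D ∧ ∀ x ∈ Metric.ball q r, f x = c := by
    intro q hq c hfq
    obtain ⟨r, hr, hball⟩ := Metric.isOpen_iff.1 hD q hq
    refine ⟨r, hr, hball, fun x hx => ?_⟩
    have hconv : Convex ℝ (Metric.ball q r) := convex_ball q r
    have := hconv.is_const_of_fderivWithin_eq_zero
      (f := f) (fun y hy => (hdiff y (hball hy)).differentiableWithinAt)
      (fun y hy => by
        rw [fderivWithin_of_isOpen Metric.isOpen_ball hy]
        exact hzero y (hball hy)) hx (Metric.mem_ball_self hr)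
    rw [this, hfq]
  have hSopen : IsOpen ({q | q ∈ D ∧ f q = f p₀} : Set (ℝ × ℝ)) := by
    rw [Metric.isOpen_iff]
    intro q ⟨hqD, hqf⟩
    obtain ⟨r, hr, hball, hcon⟩ := hloc q hqD (f p₀) hqf
    exact ⟨r, hr, fun x hx => ⟨hball hx, hcon x hx⟩⟩
  have hTopen : IsOpen ({q | q ∈ D ∧ f q ≠ f p₀} : Set (ℝ × ℝ)) := by
    rw [Metric.isOpen_iff]
    intro q ⟨hqD, hqf⟩
    obtain ⟨r, hr, hball, hcon⟩ := hloc q hqD (f q) rfl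
    exact ⟨r, hr, fun x hx => ⟨hball hx, by rw [hcon x hx]; exact hqf⟩⟩
  by_contra hne
  have := hc _ _ hSopen hTopen
    (fun x hx => by by_cases h : f x = f p₀ <;> [exact Or.inl ⟨hx, h⟩; exact Or.inr ⟨hx, h⟩])
    ⟨p₀, hp₀, hp₀, rfl⟩ ⟨p, hp, hp, hne⟩
  obtain ⟨x, _, ⟨_, h1⟩, ⟨_, h2⟩⟩ := this
  exact h2 h1

/-- A continuous linear map on `ℝ × ℝ` vanishing on the standard basis is zero. -/
lemma clm_zero {E : Type*} [NormedAddCommGroup E] [NormedSpace ℝ E]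
    (L : ℝ × ℝ →L[ℝ] E) (h1 : L (1, 0) = 0) (h2 : L (0, 1) = 0) : L = 0 := by
  apply ContinuousLinearMap.ext
  intro x
  have hx : (x : ℝ × ℝ) = x.1 • ((1:ℝ), (0:ℝ)) + x.2 • ((0:ℝ), (1:ℝ)) := by
    simp [Prod.ext_iff]
  rw [ContinuousLinearMap.zero_apply, hx, map_add, map_smul, map_smul, h1, h2]
  simp

/-- Case `cᵢ = 0` of the description of integral surfaces of the distribution `Δ` of a
minimal hypersurface of type number two with involutive distribution: the surface `z`
stays in a fixed three-dimensional affine subspace of `ℝ^{n+1}` and is minimal there. -/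
theorem minimal_case_c_zero
    (n : ℕ) (hn : 3 ≤ n)
    (D : Set (ℝ × ℝ)) (hD : IsOpen D) (hconn : IsConnected D)
    (z X Y N : ℝ × ℝ → EuclideanSpace ℝ (Fin (n + 1)))
    (e : Fin (n - 2) → ℝ × ℝ → EuclideanSpace ℝ (Fin (n + 1)))
    (Ec Gc γ₁ γ₂ ν : ℝ × ℝ → ℝ) (c : Fin (n - 2) → ℝ)
    (hz : ContDiffOn ℝ (⊤ : ℕ∞) z D) (hX : ContDiffOn ℝ (⊤ : ℕ∞) X D) (hY : ContDiffOn ℝ (⊤ : ℕ∞) Y D)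
    (hN : ContDiffOn ℝ (⊤ : ℕ∞) N D) (he : ∀ i, ContDiffOn ℝ (⊤ : ℕ∞) (e i) D)
    (hEc : ContDiffOn ℝ (⊤ : ℕ∞) Ec D) (hGc : ContDiffOn ℝ (⊤ : ℕ∞) Gc D)
    (hγ₁ : ContDiffOn ℝ (⊤ : ℕ∞) γ₁ D) (hγ₂ : ContDiffOn ℝ (⊤ : ℕ∞) γ₂ D)
    (hν : ContDiffOn ℝ (⊤ : ℕ∞) ν D)
    (hEpos : ∀ p ∈ D, 0 < Ec p) (hGpos : ∀ p ∈ D, 0 < Gc p)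
    (hνpos : ∀ p ∈ D, 0 < ν p)
    (horth : OrthFrame n D X Y N e)
    (hzu : ∀ p ∈ D, pu z p = Real.sqrt (Ec p) • X p)
    (hzv : ∀ p ∈ D, pv z p = Real.sqrt (Gc p) • Y p)
    (hXu : ∀ p ∈ D, pu X p =
      Real.sqrt (Ec p) • (γ₁ p • Y p + (∑ i, c i • e i p) + ν p • N p))
    (hYu : ∀ p ∈ D, pu Y p = -(Real.sqrt (Ec p) * γ₁ p) • X p)
    (heu : ∀ p ∈ D, ∀ i, pu (e i) p = -(Real.sqrt (Ec p) * c i) • X p)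
    (hNu : ∀ p ∈ D, pu N p = -(Real.sqrt (Ec p) * ν p) • X p)
    (hXv : ∀ p ∈ D, pv X p = (Real.sqrt (Gc p) * γ₂ p) • Y p)
    (hYv : ∀ p ∈ D, pv Y p =
      Real.sqrt (Gc p) • ((-(γ₂ p)) • X p + (∑ i, c i • e i p) - ν p • N p))
    (hev : ∀ p ∈ D, ∀ i, pv (e i) p = -(Real.sqrt (Gc p) * c i) • Y p)
    (hNv : ∀ p ∈ D, pv N p = (Real.sqrt (Gc p) * ν p) • Y p)
    -- assume in addition that all the constants `cᵢ` vanish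
    (hc0 : ∀ i, c i = 0) :
    -- `X`, `Y`, `N` and `z - z(u₀,v₀)` stay in the fixed three-dimensional subspace
    -- spanned by `X(u₀,v₀)`, `Y(u₀,v₀)`, `N(u₀,v₀)`
    (∀ p₀ ∈ D, ∀ p ∈ D,
      X p ∈ Submodule.span ℝ
          ({X p₀, Y p₀, N p₀} : Set (EuclideanSpace ℝ (Fin (n + 1)))) ∧
      Y p ∈ Submodule.span ℝ
          ({X p₀, Y p₀, N p₀} : Set (EuclideanSpace ℝ (Fin (n + 1)))) ∧
      N p ∈ Submodule.span ℝ
          ({X p₀, Y p₀, N p₀} : Set (EuclideanSpace ℝ (Fin (n + 1)))) ∧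
      z p - z p₀ ∈ Submodule.span ℝ
          ({X p₀, Y p₀, N p₀} : Set (EuclideanSpace ℝ (Fin (n + 1))))) ∧
    -- and `z` is minimal in that subspace: `z_uu·N = Eν`, `z_vv·N = -Gν`, so the mean
    -- curvature `(z_uu·N)/E + (z_vv·N)/G` vanishes
    (∀ p ∈ D,
      ⟪pu (pu z) p, N p⟫ = Ec p * ν p ∧
      ⟪pv (pv z) p, N p⟫ = -(Gc p * ν p) ∧
      ⟪pu (pu z) p, N p⟫ / Ec p + ⟪pv (pv z) p, N p⟫ / Gc p = 0) := by
  have hsum : ∀ p : ℝ × ℝ, (∑ i, c i • e i p) = (0 : EuclideanSpace ℝ (Fin (n + 1))) := by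
    intro p; simp [hc0]
  have hXu' : ∀ p ∈ D, pu X p =
      (Real.sqrt (Ec p) * γ₁ p) • Y p + (Real.sqrt (Ec p) * ν p) • N p := by
    intro p hp; rw [hXu p hp, hsum]; module
  have hYv' : ∀ p ∈ D, pv Y p =
      (-(Real.sqrt (Gc p) * γ₂ p)) • X p + (-(Real.sqrt (Gc p) * ν p)) • N p := by
    intro p hp; rw [hYv p hp, hsum]; module
  -- differentiability at points of D
  have hXd : ∀ p ∈ D, DifferentiableAt ℝ X p := fun p hp =>
    (hX.contDiffAt (hD.mem_nhds hp)).differentiableAt (by simp)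
  have hYd : ∀ p ∈ D, DifferentiableAt ℝ Y p := fun p hp =>
    (hY.contDiffAt (hD.mem_nhds hp)).differentiableAt (by simp)
  have hNd : ∀ p ∈ D, DifferentiableAt ℝ N p := fun p hp =>
    (hN.contDiffAt (hD.mem_nhds hp)).differentiableAt (by simp)
  have hzd : ∀ p ∈ D, DifferentiableAt ℝ z p := fun p hp =>
    (hz.contDiffAt (hD.mem_nhds hp)).differentiableAt (by simp)
  constructor
  · -- span part
    intro p₀ hp₀ p hp
    set V := Submodule.span ℝ
      ({X p₀, Y p₀, N p₀} : Set (EuclideanSpace ℝ (Fin (n + 1)))) with hVdef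
    have hXp₀ : X p₀ ∈ V := Submodule.subset_span (by simp)
    have hYp₀ : Y p₀ ∈ V := Submodule.subset_span (by simp)
    have hNp₀ : N p₀ ∈ V := Submodule.subset_span (by simp)
    -- key vanishing of inner products with vectors in Vᗮ
    have key : ∀ w ∈ Vᗮ, ∀ q ∈ D, ⟪w, X q⟫ = 0 ∧ ⟪w, Y q⟫ = 0 ∧ ⟪w, N q⟫ = 0 := by
      intro w hw q hq
      set f : ℝ × ℝ → ℝ := fun q =>
        ⟪w, X q⟫ * ⟪w, X q⟫ + ⟪w, Y q⟫ * ⟪w, Y q⟫ + ⟪w, N q⟫ * ⟪w, N q⟫ with hfdef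
      have main : ∀ r ∈ D, DifferentiableAt ℝ f r ∧ fderiv ℝ f r = 0 := by
        intro r hr
        have hφX : HasFDerivAt (fun q => ⟪w, X q⟫)
            ((innerSL ℝ w).comp (fderiv ℝ X r)) r :=
          ((innerSL ℝ w).hasFDerivAt).comp r (hXd r hr).hasFDerivAt
        have hφY : HasFDerivAt (fun q => ⟪w, Y q⟫)
            ((innerSL ℝ w).comp (fderiv ℝ Y r)) r :=
          ((innerSL ℝ w).hasFDerivAt).comp r (hYd r hr).hasFDerivAt
        have hφN : HasFDerivAt (fun q => ⟪w, N q⟫)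
            ((innerSL ℝ w).comp (fderiv ℝ N r)) r :=
          ((innerSL ℝ w).hasFDerivAt).comp r (hNd r hr).hasFDerivAt
        have hfd : HasFDerivAt f _ r := ((hφX.mul hφX).add (hφY.mul hφY)).add (hφN.mul hφN)
        refine ⟨hfd.differentiableAt, ?_⟩
        rw [hfd.fderiv]
        apply clm_zero
        · have e1 : fderiv ℝ X r (1, 0) = pu X r := rfl
          have e2 : fderiv ℝ Y r (1, 0) = pu Y r := rfl
          have e3 : fderiv ℝ N r (1, 0) = pu N r := rfl
          simp only [ContinuousLinearMap.add_apply, ContinuousLinearMap.smul_apply,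
            ContinuousLinearMap.comp_apply, innerSL_apply_apply, e1, e2, e3,
            hXu' r hr, hYu r hr, hNu r hr, inner_add_right, real_inner_smul_right,
            smul_eq_mul]
          ring
        · have e1 : fderiv ℝ X r (0, 1) = pv X r := rfl
          have e2 : fderiv ℝ Y r (0, 1) = pv Y r := rfl
          have e3 : fderiv ℝ N r (0, 1) = pv N r := rfl
          simp only [ContinuousLinearMap.add_apply, ContinuousLinearMap.smul_apply,
            ContinuousLinearMap.comp_apply, innerSL_apply_apply, e1, e2, e3,
            hXv r hr, hYv' r hr, hNv r hr, inner_add_right, real_inner_smul_right,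
            smul_eq_mul]
          ring
      have hfq : f q = f p₀ :=
        const_of_fderiv_zero hD hconn.isPreconnected (fun r hr => (main r hr).1)
          (fun r hr => (main r hr).2) hp₀ hq
      have hf0 : f p₀ = 0 := by
        have h1 : ⟪w, X p₀⟫ = 0 := by
          rw [real_inner_comm]; exact (Submodule.mem_orthogonal V w).1 hw _ hXp₀
        have h2 : ⟪w, Y p₀⟫ = 0 := by
          rw [real_inner_comm]; exact (Submodule.mem_orthogonal V w).1 hw _ hYp₀
        have h3 : ⟪w, N p₀⟫ = 0 := by
          rw [real_inner_comm]; exact (Submodule.mem_orthogonal V w).1 hw _ hNp₀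
        show (⟪w, X p₀⟫ * ⟪w, X p₀⟫ + ⟪w, Y p₀⟫ * ⟪w, Y p₀⟫ + ⟪w, N p₀⟫ * ⟪w, N p₀⟫ : ℝ) = 0
        rw [h1, h2, h3]; ring
      have hzero : (⟪w, X q⟫ * ⟪w, X q⟫ + ⟪w, Y q⟫ * ⟪w, Y q⟫ + ⟪w, N q⟫ * ⟪w, N q⟫ : ℝ) = 0 :=
        hfq.trans hf0
      have n1 := mul_self_nonneg (⟪w, X q⟫ : ℝ)
      have n2 := mul_self_nonneg (⟪w, Y q⟫ : ℝ)
      have n3 := mul_self_nonneg (⟪w, N q⟫ : ℝ)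
      refine ⟨mul_self_eq_zero.1 (le_antisymm (by linarith) n1),
        mul_self_eq_zero.1 (le_antisymm (by linarith) n2),
        mul_self_eq_zero.1 (le_antisymm (by linarith) n3)⟩
    have hVV : Vᗮᗮ = V := Submodule.orthogonal_orthogonal V
    have memV : ∀ v : EuclideanSpace ℝ (Fin (n + 1)),
        (∀ w ∈ Vᗮ, ⟪w, v⟫ = 0) → v ∈ V := by
      intro v hv
      rw [← hVV]
      exact (Submodule.mem_orthogonal Vᗮ v).2 hv
    refine ⟨memV _ (fun w hw => (key w hw p hp).1),
      memV _ (fun w hw => (key w hw p hp).2.1),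
      memV _ (fun w hw => (key w hw p hp).2.2),
      memV _ ?_⟩
    -- z p - z p₀ ∈ V
    intro w hw
    set g : ℝ × ℝ → ℝ := fun q => ⟪w, z q⟫ with hgdef
    have main : ∀ r ∈ D, DifferentiableAt ℝ g r ∧ fderiv ℝ g r = 0 := by
      intro r hr
      have hgd : HasFDerivAt g ((innerSL ℝ w).comp (fderiv ℝ z r)) r :=
        ((innerSL ℝ w).hasFDerivAt).comp r (hzd r hr).hasFDerivAt
      refine ⟨hgd.differentiableAt, ?_⟩
      rw [hgd.fderiv]
      apply clm_zero
      · have e1 : fderiv ℝ z r (1, 0) = pu z r := rfl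
        simp only [ContinuousLinearMap.comp_apply, innerSL_apply_apply, e1, hzu r hr,
          real_inner_smul_right, (key w hw r hr).1, mul_zero]
      · have e1 : fderiv ℝ z r (0, 1) = pv z r := rfl
        simp only [ContinuousLinearMap.comp_apply, innerSL_apply_apply, e1, hzv r hr,
          real_inner_smul_right, (key w hw r hr).2.1, mul_zero]
    have hgq : g p = g p₀ :=
      const_of_fderiv_zero hD hconn.isPreconnected (fun r hr => (main r hr).1)
        (fun r hr => (main r hr).2) hp₀ hp
    have hgq' : (⟪w, z p⟫ : ℝ) = ⟪w, z p₀⟫ := hgq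
    rw [inner_sub_right, hgq', sub_self]
  · -- minimality part
    intro p hp
    obtain ⟨hXX, hYY, hNN, hXY, hXN, hYN, -, -⟩ := horth p hp
    have hEne : Ec p ≠ 0 := ne_of_gt (hEpos p hp)
    have hGne : Gc p ≠ 0 := ne_of_gt (hGpos p hp)
    have hEcd : DifferentiableAt ℝ Ec p :=
      (hEc.contDiffAt (hD.mem_nhds hp)).differentiableAt (by simp)
    have hGcd : DifferentiableAt ℝ Gc p :=
      (hGc.contDiffAt (hD.mem_nhds hp)).differentiableAt (by simp)
    -- first: z_uu · N = Eν
    have h1 : ⟪pu (pu z) p, N p⟫ = Ec p * ν p := by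
      have heq : fderiv ℝ (pu z) p =
          fderiv ℝ (fun q => Real.sqrt (Ec q) • X q) p :=
        Filter.EventuallyEq.fderiv_eq (Filter.eventuallyEq_of_mem (hD.mem_nhds hp) hzu)
      have hsq : HasFDerivAt (fun q => Real.sqrt (Ec q))
          (fderiv ℝ (fun q => Real.sqrt (Ec q)) p) p :=
        (hEcd.sqrt hEne).hasFDerivAt
      have hS : HasFDerivAt (fun q => Real.sqrt (Ec q) • X q)
          (Real.sqrt (Ec p) • fderiv ℝ X p +
            (fderiv ℝ (fun q => Real.sqrt (Ec q)) p).smulRight (X p)) p :=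
        hsq.smul (hXd p hp).hasFDerivAt
      have hval : pu (pu z) p = Real.sqrt (Ec p) • pu X p +
          (fderiv ℝ (fun q => Real.sqrt (Ec q)) p (1, 0)) • X p := by
        show fderiv ℝ (pu z) p (1, 0) = _
        rw [heq, hS.fderiv]
        rfl
      rw [hval, hXu' p hp]
      simp only [inner_add_left, real_inner_smul_left, hXN, hYN, hNN]
      have hEs : Real.sqrt (Ec p) * Real.sqrt (Ec p) = Ec p :=
        Real.mul_self_sqrt (hEpos p hp).le
      linear_combination (ν p) * hEs
    -- second: z_vv · N = -Gν
    have h2 : ⟪pv (pv z) p, N p⟫ = -(Gc p * ν p) := by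
      have heq : fderiv ℝ (pv z) p =
          fderiv ℝ (fun q => Real.sqrt (Gc q) • Y q) p :=
        Filter.EventuallyEq.fderiv_eq (Filter.eventuallyEq_of_mem (hD.mem_nhds hp) hzv)
      have hsq : HasFDerivAt (fun q => Real.sqrt (Gc q))
          (fderiv ℝ (fun q => Real.sqrt (Gc q)) p) p :=
        (hGcd.sqrt hGne).hasFDerivAt
      have hS : HasFDerivAt (fun q => Real.sqrt (Gc q) • Y q)
          (Real.sqrt (Gc p) • fderiv ℝ Y p +
            (fderiv ℝ (fun q => Real.sqrt (Gc q)) p).smulRight (Y p)) p :=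
        hsq.smul (hYd p hp).hasFDerivAt
      have hval : pv (pv z) p = Real.sqrt (Gc p) • pv Y p +
          (fderiv ℝ (fun q => Real.sqrt (Gc q)) p (0, 1)) • Y p := by
        show fderiv ℝ (pv z) p (0, 1) = _
        rw [heq, hS.fderiv]
        rfl
      rw [hval, hYv' p hp]
      simp only [inner_add_left, real_inner_smul_left, hXN, hYN, hNN]
      have hGs : Real.sqrt (Gc p) * Real.sqrt (Gc p) = Gc p :=
        Real.mul_self_sqrt (hGpos p hp).le
      linear_combination (-(ν p)) * hGs
    refine ⟨h1, h2, ?_⟩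
    rw [h1, h2]
    field_simp
    ring
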